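/- arXiv:2206.07688 — 2 statements merged into one kernel-verified Lean document; each statement's English description precedes it below -/
import Mathlib

section
/- For every summable weighted graph (G,m) whose vertex set has at least two elements, the top of the spectrum of the normalised Laplacian satisfies λ_top(Δ) ≤ 1 + √(1 − (1 − h̄(G,m))²). (Here h̄(G,m) ∈ [0,1], so the square root is real.) -/
/-!
For `u ∈ L²(G,m)` one has `⟪Δu, u⟫ = ‖u‖² - S` with `S = ∑ m(v,w) u(v) u(w)`, so it suffices to
show `-S ≤ √(1 - (1 - h̄)²) ‖u‖²`: then `λ - Δ` is coercive, hence invertible by Lax–Milgram, for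
every `λ` above the bound.

Sweep the level sets `A_s = {u > 0, u² > s}` and `B_s = {u < 0, u² > s}` over `s > 0`. Since
`2 m(A_s, B_s) ≤ h̄ (m(A_s) + m(B_s))`, the layer-cake formula gives `R ≤ h̄ ‖u‖²`, where `R` sums
`m(v,w)` times the length of the set of levels separating `v` from `w`. Pointwise, for `s ≥ 1`,
`2s (x² + y² - 2 crossLevel x y) ≤ s² (x + y)² + (x - y)²`; summing gives
`2s (‖u‖² - R) ≤ s² (‖u‖² + S) + (‖u‖² - S)`, and the best `s` turns this, when `S < 0`, into
`(1 - h̄) ‖u‖² ≤ √(‖u‖⁴ - S²)`.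
-/

open MeasureTheory

/-- A summable weighted graph on a vertex set `V`. -/
structure SummableWeightedGraph (V : Type*) where
  m : V → V → ℝ
  symm : ∀ u v, m u v = m v u
  nonneg : ∀ u v, 0 ≤ m u v
  loopless : ∀ v, m v v = 0
  summable : Summable fun p : V × V => m p.1 p.2
  noIsolated : ∀ v, 0 < ∑' u, m v u

namespace SummableWeightedGraph

variable {V : Type*} (G : SummableWeightedGraph V)

/-- The weight of a vertex. -/
noncomputable def deg (v : V) : ℝ := ∑' u, G.m v u

/-- The weight of a set of vertices. -/
noncomputable def setWeight (S : Set V) : ℝ := ∑' v : S, G.deg v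

/-- The weight of the boundary of a set of vertices. -/
noncomputable def boundaryWeight (S : Set V) : ℝ :=
  ∑' p : ↥S × ↥Sᶜ, G.m p.1 p.2

/-- The Cheeger constant. -/
noncomputable def cheegerConst : ℝ :=
  sInf { r : ℝ | ∃ S : Set V, S.Nonempty ∧ G.setWeight S ≤ G.setWeight Sᶜ ∧
    r = G.boundaryWeight S / G.setWeight S }

/-- The weighted counting measure on vertices. -/
noncomputable def measure [MeasurableSpace V] : Measure V :=
  Measure.sum fun v => ENNReal.ofReal (G.deg v) • Measure.dirac v

/-- The normalised Laplacian, characterised by its pointwise formula. -/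
def IsLaplacian [MeasurableSpace V]
    (L : Lp ℝ 2 G.measure →L[ℝ] Lp ℝ 2 G.measure) : Prop :=
  ∀ f : Lp ℝ 2 G.measure, ∀ᵐ v ∂G.measure,
    L f v = f v - (G.deg v)⁻¹ * ∑' u, G.m v u * f u

end SummableWeightedGraph

namespace SummableWeightedGraph

variable {V : Type*} (G : SummableWeightedGraph V)

/-- Total weight `m(A,B)` of the edges joining `A` to `B`. -/
noncomputable def pairWeight (A B : Set V) : ℝ := ∑' q : ↥A × ↥B, G.m q.1 q.2

/-- The dual Cheeger ratio of a pair of disjoint nonempty sets of vertices. -/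
noncomputable def dualCheegerRatio (A B : Set V) : ℝ :=
  2 * G.pairWeight A B / (G.setWeight A + G.setWeight B)

/-- The dual Cheeger constant. -/
noncomputable def dualCheegerConst : ℝ :=
  sSup { r : ℝ | ∃ A B : Set V, A.Nonempty ∧ B.Nonempty ∧ Disjoint A B ∧
    r = G.dualCheegerRatio A B }

end SummableWeightedGraph

open Set
open scoped ENNReal RealInnerProductSpace

lemma le_sqrt_mul_of_forall_two_mul_le {X a b : ℝ} (ha : 0 ≤ a) (hab : a ≤ b)
    (h : ∀ s, 1 ≤ s → 2 * s * X ≤ s ^ 2 * a + b) : X ≤ √(a * b) := by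
  rcases ha.eq_or_lt with rfl | ha
  · rw [zero_mul, Real.sqrt_zero]
    by_contra! hX
    have hs := h (b / X + 1) (by have := div_nonneg hab hX.le; linarith)
    have e : 2 * (b / X + 1) * X = 2 * b + 2 * X := by field_simp
    linarith
  · set t := √(a * b)
    have ht : t ^ 2 = a * b := Real.sq_sqrt (by nlinarith)
    have hta : a ≤ t := Real.le_sqrt_of_sq_le (by nlinarith)
    -- the optimal choice `s = √(b / a) = t / a`
    have hs := h (t / a) ((one_le_div ha).2 hta)
    have e : (t / a) ^ 2 * a = b := by rw [div_pow, ht]; field_simp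
    have htX : t / a * X ≤ b := by linarith
    rw [div_mul_eq_mul_div, div_le_iff₀ ha] at htX
    nlinarith

lemma neg_le_sqrt_one_sub_sq_mul {W S R h : ℝ} (hW : 0 ≤ W) (hh : h ≤ 1) (hR : R ≤ h * W)
    (hWS : 0 ≤ W + S) (hs : ∀ s, 1 ≤ s → 2 * s * (W - R) ≤ s ^ 2 * (W + S) + (W - S)) :
    -S ≤ √(1 - (1 - h) ^ 2) * W := by
  rcases le_or_gt 0 S with hS | hS
  · linarith [mul_nonneg (Real.sqrt_nonneg (1 - (1 - h) ^ 2)) hW]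
  have hX : (1 - h) * W ≤ W - R := by linarith
  have hXY := le_sqrt_mul_of_forall_two_mul_le hWS (by linarith) hs
  have hsq : ((1 - h) * W) ^ 2 ≤ (W + S) * (W - S) :=
    calc ((1 - h) * W) ^ 2 ≤ √((W + S) * (W - S)) ^ 2 :=
          pow_le_pow_left₀ (mul_nonneg (by linarith) hW) (hX.trans hXY) 2
      _ = (W + S) * (W - S) := Real.sq_sqrt (mul_nonneg hWS (by linarith))
  calc -S ≤ √(S ^ 2) := by rw [Real.sqrt_sq_eq_abs]; exact neg_le_abs S
    _ ≤ √((1 - (1 - h) ^ 2) * W ^ 2) := Real.sqrt_le_sqrt (by nlinarith)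
    _ = √(1 - (1 - h) ^ 2) * W := by rw [Real.sqrt_mul' _ (sq_nonneg W), Real.sqrt_sq hW]

theorem lintegral_tsum_indicator_lt {ι : Type*} [Countable ι] (c : ι → ℝ≥0∞) (a : ι → ℝ) :
    ∫⁻ s in Ioi 0, ∑' i, {i | s < a i}.indicator c i = ∑' i, c i * ENNReal.ofReal (a i) := by
  have h s i : {i | s < a i}.indicator c i = (Iio (a i)).indicator (fun _ => c i) s := by
    by_cases hs : s < a i <;> simp [indicator, hs]
  simp_rw [h]
  rw [lintegral_tsum fun i => (measurable_const.indicator measurableSet_Iio).aemeasurable]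
  refine tsum_congr fun i => ?_
  rw [lintegral_indicator_const measurableSet_Iio,
    Measure.restrict_apply measurableSet_Iio, Iio_inter_Ioi, Real.volume_Ioo, sub_zero]

section LevelSets

variable {α : Type*} (f : α → ℝ) (s : ℝ)

def posLevelSet : Set α := {v | 0 < f v ∧ s < f v ^ 2}

def negLevelSet : Set α := {v | f v < 0 ∧ s < f v ^ 2}

/-- The length of the set of levels `s > 0` at which `x` and `y` lie in opposite level sets
`posLevelSet` and `negLevelSet` (see `setOf_lt_crossLevel_eq`). -/
noncomputable def crossLevel (x y : ℝ) : ℝ := if x * y < 0 then min (x ^ 2) (y ^ 2) else 0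

lemma crossLevel_nonneg (x y : ℝ) : 0 ≤ crossLevel x y := by
  unfold crossLevel; split_ifs <;> positivity

lemma crossLevel_le (x y : ℝ) : crossLevel x y ≤ x ^ 2 + y ^ 2 := by
  unfold crossLevel; split_ifs
  · exact (min_le_left _ _).trans (le_add_of_nonneg_right (sq_nonneg y))
  · positivity

lemma two_mul_sq_add_sq_sub_crossLevel_le {s : ℝ} (hs : 1 ≤ s) (x y : ℝ) :
    2 * s * (x ^ 2 + y ^ 2 - 2 * crossLevel x y)
      ≤ (s ^ 2 + 1) * (x ^ 2 + y ^ 2) + 2 * (s ^ 2 - 1) * (x * y) := by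
  unfold crossLevel
  split_ifs with hxy
  · -- here `x² + y² - 2 crossLevel x y = |x + y| |x - y|`, and AM-GM applies
    rcases le_total (x ^ 2) (y ^ 2) with h | h
    · rw [min_eq_left h]; nlinarith [sq_nonneg (s * (x + y) + (x - y))]
    · rw [min_eq_right h]; nlinarith [sq_nonneg (s * (x + y) - (x - y))]
  · nlinarith [mul_nonneg (sq_nonneg (s - 1)) (add_nonneg (sq_nonneg x) (sq_nonneg y)),
      mul_nonneg (by nlinarith : 0 ≤ s ^ 2 - 1) (not_lt.mp hxy)]

lemma disjoint_posLevelSet_negLevelSet : Disjoint (posLevelSet f s) (negLevelSet f s) :=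
  disjoint_left.2 fun _ hpos hneg => lt_asymm hpos.1 hneg.1

variable {s}

lemma setOf_lt_sq_eq_union (hs : 0 < s) :
    {v | s < f v ^ 2} = posLevelSet f s ∪ negLevelSet f s := by
  ext v
  simp only [posLevelSet, negLevelSet, mem_ofPred_eq, mem_union]
  constructor
  · intro hv
    rcases lt_trichotomy (f v) 0 with h | h | h
    · exact Or.inr ⟨h, hv⟩
    · rw [h] at hv; linarith
    · exact Or.inl ⟨h, hv⟩
  · rintro (⟨-, hv⟩ | ⟨-, hv⟩) <;> exact hv

lemma setOf_lt_crossLevel_eq (hs : 0 < s) :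
    {p : α × α | s < crossLevel (f p.1) (f p.2)}
      = posLevelSet f s ×ˢ negLevelSet f s ∪ negLevelSet f s ×ˢ posLevelSet f s := by
  ext ⟨u, v⟩
  simp only [crossLevel, posLevelSet, negLevelSet, mem_ofPred_eq, mem_union, mem_prod]
  split_ifs with h
  · rw [lt_min_iff]
    rcases mul_neg_iff.1 h with ⟨hu, hv⟩ | ⟨hu, hv⟩ <;>
      simp [hu, hv, hu.not_gt, hv.not_gt]
  · simp only [not_lt.2 hs.le, false_iff]
    rintro (⟨⟨hu, -⟩, hv, -⟩ | ⟨⟨hu, -⟩, hv, -⟩)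
    · exact h (mul_neg_of_pos_of_neg hu hv)
    · exact h (mul_neg_of_neg_of_pos hu hv)

end LevelSets

section Spectrum

variable {E : Type*} [NormedAddCommGroup E] [InnerProductSpace ℝ E] [CompleteSpace E]

theorem le_of_mem_spectrum_of_inner_le {T : E →L[ℝ] E} {c : ℝ}
    (hT : ∀ u, ⟪T u, u⟫ ≤ c * ‖u‖ ^ 2) {μ : ℝ} (hμ : μ ∈ spectrum ℝ T) : μ ≤ c := by
  by_contra! hcμ
  set A := algebraMap ℝ (E →L[ℝ] E) μ - T
  have hA u : A u = μ • u - T u := by simp [A, Algebra.algebraMap_eq_smul_one]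
  have hcoercive : IsCoercive ((innerSL ℝ).comp A) := by
    refine ⟨μ - c, sub_pos.2 hcμ, fun u => ?_⟩
    simp only [ContinuousLinearMap.comp_apply, innerSL_apply_apply, hA, inner_sub_left,
      real_inner_smul_left, real_inner_self_eq_norm_sq]
    nlinarith [hT u]
  refine spectrum.mem_iff.1 hμ ⟨hcoercive.continuousLinearEquivOfBilin.toUnit, ?_⟩
  ext1 u
  refine ext_inner_right ℝ fun w => ?_
  exact hcoercive.continuousLinearEquivOfBilin_apply u w

end Spectrum

namespace SummableWeightedGraph

variable {V : Type*} (G : SummableWeightedGraph V)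

lemma deg_pos (v : V) : 0 < G.deg v := G.noIsolated v

lemma deg_nonneg (v : V) : 0 ≤ G.deg v := (G.deg_pos v).le

lemma summable_m_left (v : V) : Summable (G.m v) := G.summable.prod_factor v

lemma summable_deg : Summable G.deg :=
  ((summable_prod_of_nonneg fun p => G.nonneg p.1 p.2).mp G.summable).2

lemma setWeight_nonneg (S : Set V) : 0 ≤ G.setWeight S :=
  tsum_nonneg fun v => G.deg_nonneg v

lemma setWeight_pos {S : Set V} (hS : S.Nonempty) : 0 < G.setWeight S := by
  obtain ⟨v, hv⟩ := hS
  exact (G.deg_pos v).trans_le <|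
    (G.summable_deg.subtype S).le_tsum ⟨v, hv⟩ fun w _ => G.deg_nonneg w.1

lemma summable_m_prod (A B : Set V) : Summable fun q : A × B => G.m q.1 q.2 :=
  G.summable.comp_injective (Subtype.val_injective.prodMap Subtype.val_injective)

lemma pairWeight_nonneg (A B : Set V) : 0 ≤ G.pairWeight A B :=
  tsum_nonneg fun _ => G.nonneg _ _

lemma pairWeight_comm (A B : Set V) : G.pairWeight A B = G.pairWeight B A := by
  rw [pairWeight, pairWeight, ← (Equiv.prodComm B A).tsum_eq]
  exact tsum_congr fun q => G.symm _ _

lemma pairWeight_le_setWeight (A B : Set V) : G.pairWeight A B ≤ G.setWeight A := by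
  have hAB := G.summable_m_prod A B
  rw [pairWeight, hAB.tsum_prod' hAB.prod_factor]
  refine hAB.prod.tsum_le_tsum (fun a => ?_) (G.summable_deg.subtype A)
  exact (G.summable_m_left a).tsum_subtype_le (G.m a) B (G.nonneg a)

lemma pairWeight_empty_left (B : Set V) : G.pairWeight ∅ B = 0 := by
  simp [pairWeight]

lemma dualCheegerRatio_nonneg (A B : Set V) : 0 ≤ G.dualCheegerRatio A B :=
  div_nonneg (mul_nonneg zero_le_two (G.pairWeight_nonneg A B))
    (add_nonneg (G.setWeight_nonneg A) (G.setWeight_nonneg B))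

lemma dualCheegerRatio_le_one (A B : Set V) : G.dualCheegerRatio A B ≤ 1 := by
  refine div_le_one_of_le₀ ?_ (add_nonneg (G.setWeight_nonneg A) (G.setWeight_nonneg B))
  linarith [G.pairWeight_le_setWeight A B, G.pairWeight_le_setWeight B A, G.pairWeight_comm A B]

lemma dualCheegerConst_nonneg : 0 ≤ G.dualCheegerConst :=
  Real.sSup_nonneg <| by rintro _ ⟨A, B, -, -, -, rfl⟩; exact G.dualCheegerRatio_nonneg A B

lemma dualCheegerConst_le_one : G.dualCheegerConst ≤ 1 :=
  Real.sSup_le (by rintro _ ⟨A, B, -, -, -, rfl⟩; exact G.dualCheegerRatio_le_one A B) zero_le_one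

lemma two_mul_pairWeight_le {A B : Set V} (hAB : Disjoint A B) :
    2 * G.pairWeight A B ≤ G.dualCheegerConst * (G.setWeight A + G.setWeight B) := by
  have hRHS := mul_nonneg G.dualCheegerConst_nonneg
    (add_nonneg (G.setWeight_nonneg A) (G.setWeight_nonneg B))
  rcases A.eq_empty_or_nonempty with rfl | hA
  · simpa [pairWeight_empty_left] using hRHS
  rcases B.eq_empty_or_nonempty with rfl | hB
  · simpa [pairWeight_comm _ A, pairWeight_empty_left] using hRHS
  have hpos : 0 < G.setWeight A + G.setWeight B := add_pos (G.setWeight_pos hA) (G.setWeight_pos hB)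
  have hle : G.dualCheegerRatio A B ≤ G.dualCheegerConst :=
    le_csSup ⟨1, by rintro _ ⟨A, B, -, -, -, rfl⟩; exact G.dualCheegerRatio_le_one A B⟩
      ⟨A, B, hA, hB, hAB, rfl⟩
  rwa [dualCheegerRatio, div_le_iff₀ hpos] at hle

lemma ofReal_setWeight (S : Set V) :
    ENNReal.ofReal (G.setWeight S) = ∑' v, S.indicator (fun v => ENNReal.ofReal (G.deg v)) v := by
  rw [setWeight, ENNReal.ofReal_tsum_of_nonneg (f := fun v : S => G.deg v)
    (fun v => G.deg_nonneg v) (G.summable_deg.subtype S),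
    tsum_subtype S fun v => ENNReal.ofReal (G.deg v)]

lemma ofReal_pairWeight (A B : Set V) :
    ENNReal.ofReal (G.pairWeight A B)
      = ∑' p : V × V, (A ×ˢ B).indicator (fun p => ENNReal.ofReal (G.m p.1 p.2)) p := by
  rw [pairWeight, ENNReal.ofReal_tsum_of_nonneg (fun _ => G.nonneg _ _) (G.summable_m_prod A B),
    ← (Equiv.Set.prod A B).tsum_eq, ← tsum_subtype (A ×ˢ B)]
  rfl

section EdgeSums

variable (f : V → ℝ)

noncomputable def normSq : ℝ := ∑' v, G.deg v * f v ^ 2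

noncomputable def edgeSum (F : ℝ → ℝ → ℝ) : ℝ := ∑' p : V × V, G.m p.1 p.2 * F (f p.1) (f p.2)

variable {f}

lemma normSq_nonneg : 0 ≤ G.normSq f :=
  tsum_nonneg fun v => mul_nonneg (G.deg_nonneg v) (sq_nonneg _)

lemma hasSum_m_mul_sq_fst (hf : Summable fun v => G.deg v * f v ^ 2) :
    HasSum (fun p : V × V => G.m p.1 p.2 * f p.1 ^ 2) (G.normSq f) := by
  have hrow v : HasSum (fun u => G.m v u * f v ^ 2) (G.deg v * f v ^ 2) :=
    (G.summable_m_left v).hasSum.mul_right _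
  have hsum : Summable fun p : V × V => G.m p.1 p.2 * f p.1 ^ 2 :=
    (summable_prod_of_nonneg fun p => mul_nonneg (G.nonneg _ _) (sq_nonneg _)).2
      ⟨fun v => (hrow v).summable, hf.congr fun v => (hrow v).tsum_eq.symm⟩
  rw [normSq, ← hsum.hasSum.prod_fiberwise hrow |>.unique hf.hasSum]
  exact hsum.hasSum

lemma hasSum_edge_sq_add_sq (hf : Summable fun v => G.deg v * f v ^ 2) :
    HasSum (fun p : V × V => G.m p.1 p.2 * (f p.1 ^ 2 + f p.2 ^ 2)) (2 * G.normSq f) := by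
  have hsnd : HasSum (fun p : V × V => G.m p.1 p.2 * f p.2 ^ 2) (G.normSq f) := by
    rw [← (Equiv.prodComm V V).hasSum_iff]
    convert G.hasSum_m_mul_sq_fst hf using 2 with p
    exact congrArg (· * _) (G.symm _ _)
  simpa only [mul_add, two_mul] using (G.hasSum_m_mul_sq_fst hf).add hsnd

lemma summable_edge (hf : Summable fun v => G.deg v * f v ^ 2) {F : ℝ → ℝ → ℝ} {C : ℝ}
    (hF : ∀ x y, |F x y| ≤ C * (x ^ 2 + y ^ 2)) :
    Summable fun p : V × V => G.m p.1 p.2 * F (f p.1) (f p.2) := by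
  refine ((G.hasSum_edge_sq_add_sq hf).summable.mul_left C).of_norm_bounded fun p => ?_
  rw [Real.norm_eq_abs, abs_mul, abs_of_nonneg (G.nonneg _ _), mul_left_comm]
  exact mul_le_mul_of_nonneg_left (hF _ _) (G.nonneg _ _)

lemma hasSum_edgeSum_mul (hf : Summable fun v => G.deg v * f v ^ 2) :
    HasSum (fun p : V × V => G.m p.1 p.2 * (f p.1 * f p.2)) (G.edgeSum f (· * ·)) :=
  (G.summable_edge hf (C := 1) fun x y => by
    rw [one_mul, abs_mul]
    nlinarith [sq_nonneg (|x| - |y|), sq_abs x, sq_abs y]).hasSum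

lemma hasSum_edgeSum_crossLevel (hf : Summable fun v => G.deg v * f v ^ 2) :
    HasSum (fun p : V × V => G.m p.1 p.2 * crossLevel (f p.1) (f p.2)) (G.edgeSum f crossLevel) :=
  (G.summable_edge hf (C := 1) fun x y => by
    rw [one_mul, abs_of_nonneg (crossLevel_nonneg x y)]; exact crossLevel_le x y).hasSum

lemma summable_m_mul (hf : Summable fun v => G.deg v * f v ^ 2) (v : V) :
    Summable fun w => G.m v w * f w := by
  refine ((G.summable_m_left v).add ((G.hasSum_edge_sq_add_sq hf).summable.prod_factor v))
    |>.of_norm_bounded fun w => ?_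
  rw [Real.norm_eq_abs, abs_mul, abs_of_nonneg (G.nonneg v w)]
  have : |f w| ≤ 1 + (f v ^ 2 + f w ^ 2) := by
    nlinarith [sq_nonneg (|f w| - 1), sq_abs (f w), sq_nonneg (f v)]
  nlinarith [mul_le_mul_of_nonneg_left this (G.nonneg v w)]

end EdgeSums

section Sweep

variable [Countable V] (f : V → ℝ)

lemma lintegral_setWeight_levelSets :
    ∫⁻ s in Ioi 0, (ENNReal.ofReal (G.setWeight (posLevelSet f s))
        + ENNReal.ofReal (G.setWeight (negLevelSet f s)))
      = ∑' v, ENNReal.ofReal (G.deg v) * ENNReal.ofReal (f v ^ 2) := by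
  rw [← lintegral_tsum_indicator_lt]
  refine setLIntegral_congr_fun measurableSet_Ioi fun s hs => ?_
  rw [setOf_lt_sq_eq_union f hs, indicator_union_of_disjoint (disjoint_posLevelSet_negLevelSet f s),
    ENNReal.tsum_add, ofReal_setWeight, ofReal_setWeight]

lemma lintegral_pairWeight_levelSets :
    ∫⁻ s in Ioi 0, (ENNReal.ofReal (G.pairWeight (posLevelSet f s) (negLevelSet f s))
        + ENNReal.ofReal (G.pairWeight (negLevelSet f s) (posLevelSet f s)))
      = ∑' p : V × V,
          ENNReal.ofReal (G.m p.1 p.2) * ENNReal.ofReal (crossLevel (f p.1) (f p.2)) := by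
  rw [← lintegral_tsum_indicator_lt]
  refine setLIntegral_congr_fun measurableSet_Ioi fun s hs => ?_
  rw [setOf_lt_crossLevel_eq f hs,
    indicator_union_of_disjoint (disjoint_prod.2 (.inl (disjoint_posLevelSet_negLevelSet f s))),
    ENNReal.tsum_add, ofReal_pairWeight, ofReal_pairWeight]

variable {f}

lemma edgeSum_crossLevel_le (hf : Summable fun v => G.deg v * f v ^ 2) :
    G.edgeSum f crossLevel ≤ G.dualCheegerConst * G.normSq f := by
  have hh := G.dualCheegerConst_nonneg
  rw [← ENNReal.ofReal_le_ofReal_iff (mul_nonneg hh G.normSq_nonneg)]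
  calc ENNReal.ofReal (G.edgeSum f crossLevel)
      = ∑' p : V × V,
          ENNReal.ofReal (G.m p.1 p.2) * ENNReal.ofReal (crossLevel (f p.1) (f p.2)) := by
        rw [edgeSum, ENNReal.ofReal_tsum_of_nonneg
          (fun p => mul_nonneg (G.nonneg _ _) (crossLevel_nonneg _ _))
          (G.hasSum_edgeSum_crossLevel hf).summable]
        simp_rw [ENNReal.ofReal_mul (G.nonneg _ _)]
    _ = ∫⁻ s in Ioi 0, (ENNReal.ofReal (G.pairWeight (posLevelSet f s) (negLevelSet f s))
          + ENNReal.ofReal (G.pairWeight (negLevelSet f s) (posLevelSet f s))) :=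
        (G.lintegral_pairWeight_levelSets f).symm
    _ ≤ ∫⁻ s in Ioi 0, ENNReal.ofReal G.dualCheegerConst
          * (ENNReal.ofReal (G.setWeight (posLevelSet f s))
            + ENNReal.ofReal (G.setWeight (negLevelSet f s))) := by
        refine lintegral_mono fun s => ?_
        rw [G.pairWeight_comm (negLevelSet f s), ← ENNReal.ofReal_add (G.pairWeight_nonneg _ _)
          (G.pairWeight_nonneg _ _), ← ENNReal.ofReal_add (G.setWeight_nonneg _)
          (G.setWeight_nonneg _), ← ENNReal.ofReal_mul hh]
        exact ENNReal.ofReal_le_ofReal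
          (by linarith [G.two_mul_pairWeight_le (disjoint_posLevelSet_negLevelSet f s)])
    _ = ENNReal.ofReal (G.dualCheegerConst * G.normSq f) := by
        rw [lintegral_const_mul' _ _ ENNReal.ofReal_ne_top, lintegral_setWeight_levelSets,
          ENNReal.ofReal_mul hh, normSq, ENNReal.ofReal_tsum_of_nonneg
            (fun v => mul_nonneg (G.deg_nonneg v) (sq_nonneg _)) hf]
        simp_rw [ENNReal.ofReal_mul (G.deg_nonneg _)]

theorem neg_edgeSum_mul_le (hf : Summable fun v => G.deg v * f v ^ 2) :
    -G.edgeSum f (· * ·) ≤ √(1 - (1 - G.dualCheegerConst) ^ 2) * G.normSq f := by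
  have hE := G.hasSum_edge_sq_add_sq hf
  have hS := G.hasSum_edgeSum_mul hf
  have hR := G.hasSum_edgeSum_crossLevel hf
  set W := G.normSq f
  set S := G.edgeSum f (· * ·)
  have hWS : 0 ≤ W + S := by
    have := (hE.add (hS.mul_left 2)).nonneg fun p => by
      nlinarith [mul_nonneg (G.nonneg p.1 p.2) (sq_nonneg (f p.1 + f p.2))]
    linarith
  have hsweep s (hs : 1 ≤ s) :
      2 * s * (W - G.edgeSum f crossLevel) ≤ s ^ 2 * (W + S) + (W - S) := by
    have := hasSum_le (fun p => ?_) ((hE.mul_left (2 * s)).sub (hR.mul_left (4 * s)))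
      ((hE.mul_left (s ^ 2 + 1)).add (hS.mul_left (2 * (s ^ 2 - 1))))
    · linarith
    · have := mul_le_mul_of_nonneg_left (two_mul_sq_add_sq_sub_crossLevel_le hs (f p.1) (f p.2))
        (G.nonneg p.1 p.2)
      linarith
  exact neg_le_sqrt_one_sub_sq_mul G.normSq_nonneg G.dualCheegerConst_le_one
    (G.edgeSum_crossLevel_le hf) hWS hsweep

end Sweep

section L2

variable [MeasurableSpace V]

lemma forall_of_ae {P : V → Prop} (h : ∀ᵐ v ∂G.measure, P v) (v : V) : P v := by
  by_contra hv
  have hle : ENNReal.ofReal (G.deg v) ≤ G.measure {v} :=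
    calc ENNReal.ofReal (G.deg v) = (ENNReal.ofReal (G.deg v) • Measure.dirac v) {v} := by
          simp [Measure.dirac_apply_of_mem (mem_singleton v)]
      _ ≤ G.measure {v} := Measure.le_iff'.1 (Measure.le_sum _ v) {v}
  rw [measure_mono_null (singleton_subset_iff.2 hv) (ae_iff.1 h), nonpos_iff_eq_zero,
    ENNReal.ofReal_eq_zero] at hle
  exact (G.deg_pos v).not_ge hle

lemma hasSum_integral {F : V → ℝ} (hF : Integrable F G.measure) (hFm : StronglyMeasurable F) :
    HasSum (fun v => G.deg v * F v) (∫ v, F v ∂G.measure) := by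
  have h := hasSum_integral_measure (μ := fun v => ENNReal.ofReal (G.deg v) • Measure.dirac v) hF
  have hdirac v : ∫ x, F x ∂(ENNReal.ofReal (G.deg v) • Measure.dirac v) = G.deg v * F v := by
    rw [integral_smul_measure, integral_dirac' F v hFm, ENNReal.toReal_ofReal (G.deg_nonneg v),
      smul_eq_mul]
  simp only [hdirac] at h
  exact h

lemma hasSum_inner (f g : Lp ℝ 2 G.measure) :
    HasSum (fun v => G.deg v * (f v * g v)) ⟪f, g⟫ := by
  have := G.hasSum_integral (L2.integrable_inner (𝕜 := ℝ) f g)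
    ((Lp.stronglyMeasurable f).inner (Lp.stronglyMeasurable g))
  simpa [L2.inner_def, mul_comm] using this

lemma hasSum_deg_mul_sq (f : Lp ℝ 2 G.measure) :
    HasSum (fun v => G.deg v * f v ^ 2) (‖f‖ ^ 2) := by
  rw [← real_inner_self_eq_norm_sq]
  simpa only [sq] using G.hasSum_inner f f

variable {G} {Δ : Lp ℝ 2 G.measure →L[ℝ] Lp ℝ 2 G.measure}

lemma inner_laplacian_self (hΔ : G.IsLaplacian Δ) (u : Lp ℝ 2 G.measure) :
    ⟪Δ u, u⟫ = ‖u‖ ^ 2 - G.edgeSum u (· * ·) := by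
  have hf := (G.hasSum_deg_mul_sq u).summable
  have hrow v : HasSum (fun w => G.m v w * (u v * u w)) (u v * ∑' w, G.m v w * u w) :=
    (G.summable_m_mul hf v).hasSum.mul_left (u v) |>.congr_fun fun w => by ring
  have hdiff := (G.hasSum_deg_mul_sq u).sub ((G.hasSum_edgeSum_mul hf).prod_fiberwise hrow)
  have hpt v : G.deg v * (Δ u v * u v) = G.deg v * u v ^ 2 - u v * ∑' w, G.m v w * u w := by
    rw [G.forall_of_ae (hΔ u) v]
    field_simp [(G.deg_pos v).ne']
  refine (G.hasSum_inner (Δ u) u).unique ?_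
  simp only [hpt]
  exact hdiff

theorem inner_laplacian_le [Countable V] (hΔ : G.IsLaplacian Δ) (u : Lp ℝ 2 G.measure) :
    ⟪Δ u, u⟫ ≤ (1 + √(1 - (1 - G.dualCheegerConst) ^ 2)) * ‖u‖ ^ 2 := by
  have hu := G.hasSum_deg_mul_sq u
  have := G.neg_edgeSum_mul_le hu.summable
  rw [normSq, hu.tsum_eq] at this
  rw [inner_laplacian_self hΔ u]
  linarith

end L2

end SummableWeightedGraph

open SummableWeightedGraph in
theorem top_le_dualCheeger_bound_general {V : Type*} [MeasurableSpace V]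
    [Countable V] (G : SummableWeightedGraph V)
    (Δ : Lp ℝ 2 G.measure →L[ℝ] Lp ℝ 2 G.measure) (hΔ : G.IsLaplacian Δ) :
    sSup (spectrum ℝ Δ) ≤ 1 + Real.sqrt (1 - (1 - G.dualCheegerConst) ^ 2) :=
  Real.sSup_le (fun _ hμ => le_of_mem_spectrum_of_inner_le (inner_laplacian_le hΔ) hμ)
    (by positivity)

open SummableWeightedGraph in
/-- `λ_top(Δ) ≤ 1 + √(1 - (1 - h̄(G,m))²)`. -/
theorem top_le_dualCheeger_bound {V : Type*} [MeasurableSpace V]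
    [MeasurableSingletonClass V] [Countable V] [Nontrivial V] (G : SummableWeightedGraph V)
    (Δ : Lp ℝ 2 G.measure →L[ℝ] Lp ℝ 2 G.measure) (hΔ : G.IsLaplacian Δ) :
    sSup (spectrum ℝ Δ) ≤ 1 + Real.sqrt (1 - (1 - G.dualCheegerConst) ^ 2) :=
  top_le_dualCheeger_bound_general G Δ hΔ
end

section
/- Let (K,m) be the infinite complete graph with weights m(i,j) = p_i·p_j, where p_1 ≥ p_2 ≥ p_3 ≥ … > 0 and ∑ p_i = 1. If p_1 ≥ 1/2, then κ(K,m) = 1 − p_1. -/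
/-! For `v ∈ S` and `p(S) = ∑_{u ∈ S} p_u` one computes
`p_S(v) = (p(S) - p_v) / (1 - p_v)`, which lies between `p(S) - p_v` and `p(S)`. Hence the
partition `{o} ⊔ {o}ᶜ` has `κ = 1 - p_o`, the supremum over `{o}ᶜ` being approached along vertices
with `p_w → 0`. In any other partition the part containing `o` has a second vertex `v`, and
`p_A(v) ≥ p_o ≥ 1 - p_o`. -/

open MeasureTheory

namespace SummableWeightedGraph

variable {V : Type*} (G : SummableWeightedGraph V)

/-- `p_S(v)`, the probability that the random walk moves from `v` into `S` in one step. -/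
noncomputable def pProb (S : Set V) (v : V) : ℝ := (∑' u : S, G.m v u) / G.deg v

/-- `κ(A,B)` for a partition `V = A ⊔ B` into nonempty sets. -/
noncomputable def kappaPair (A B : Set V) : ℝ :=
  max (⨆ v : A, G.pProb A v) (⨆ w : B, G.pProb B w)

/-- The invariant `κ(G,m)`. -/
noncomputable def kappa : ℝ :=
  sInf { r : ℝ | ∃ A B : Set V, A.Nonempty ∧ B.Nonempty ∧ Disjoint A B ∧
    A ∪ B = Set.univ ∧ r = G.kappaPair A B }

end SummableWeightedGraph

theorem hasSum_ite_eq_mul {ι : Type*} [DecidableEq ι] {f : ι → ℝ} {a : ℝ} (hf : HasSum f a)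
    (c : ℝ) (i : ι) : HasSum (fun j => if i = j then 0 else c * f j) (c * (a - f i)) := by
  simpa only [mul_ite, mul_zero, @eq_comm _ _ i] using (hasSum_ite_sub_hasSum hf i).mul_left c

namespace SummableWeightedGraph

variable {V : Type*} {G : SummableWeightedGraph V}

theorem kappaPair_comm (A B : Set V) : G.kappaPair A B = G.kappaPair B A :=
  max_comm _ _

theorem iSup_pProb_singleton (v : V) : ⨆ u : ({v} : Set V), G.pProb {v} u = 0 := by
  rw [ciSup_unique]
  change (∑' u : ({v} : Set V), G.m v u) / G.deg v = 0
  rw [tsum_singleton v (G.m v), G.loopless, zero_div]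

structure IsCompleteProductGraph [DecidableEq V] (G : SummableWeightedGraph V) (p : V → ℝ) :
    Prop where
  pos : ∀ i, 0 < p i
  hasSum : HasSum p 1
  m_eq : ∀ i j, G.m i j = if i = j then 0 else p i * p j

namespace IsCompleteProductGraph

variable [DecidableEq V] {p : V → ℝ}

theorem deg_eq (hG : G.IsCompleteProductGraph p) (v : V) : G.deg v = p v * (1 - p v) := by
  rw [deg, ← (hasSum_ite_eq_mul hG.hasSum (p v) v).tsum_eq]
  exact tsum_congr (hG.m_eq v)

theorem lt_one (hG : G.IsCompleteProductGraph p) (v : V) : p v < 1 := by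
  have h := G.noIsolated v
  rw [← deg, hG.deg_eq, mul_pos_iff_of_pos_left (hG.pos v)] at h
  linarith

theorem hasSum_subtype (hG : G.IsCompleteProductGraph p) (S : Set V) :
    HasSum (fun u : S => p u) (∑' u : S, p u) :=
  (hG.hasSum.summable.subtype S).hasSum

theorem hasSum_m_subtype (hG : G.IsCompleteProductGraph p) {S : Set V} {v : V} (hv : v ∈ S) :
    HasSum (fun u : S => G.m v u) (p v * (∑' u : S, p u - p v)) := by
  convert hasSum_ite_eq_mul (hG.hasSum_subtype S) (p v) ⟨v, hv⟩ using 1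
  ext u
  by_cases h : v = u <;> simp [hG.m_eq, h, Subtype.ext_iff]

theorem tsum_subtype_le_one (hG : G.IsCompleteProductGraph p) (S : Set V) :
    ∑' u : S, p u ≤ 1 :=
  (Summable.tsum_subtype_le p S (fun i => (hG.pos i).le) hG.hasSum.summable).trans_eq
    hG.hasSum.tsum_eq

theorem pProb_eq (hG : G.IsCompleteProductGraph p) {S : Set V} {v : V} (hv : v ∈ S) :
    G.pProb S v = (∑' u : S, p u - p v) / (1 - p v) := by
  rw [pProb, (hG.hasSum_m_subtype hv).tsum_eq, hG.deg_eq,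
    mul_div_mul_left _ _ (hG.pos v).ne']

theorem pProb_le_tsum_subtype (hG : G.IsCompleteProductGraph p) {S : Set V} {v : V}
    (hv : v ∈ S) : G.pProb S v ≤ ∑' u : S, p u := by
  have := hG.tsum_subtype_le_one S
  rw [hG.pProb_eq hv, div_le_iff₀ (by linarith [hG.lt_one v])]
  nlinarith [hG.pos v]

theorem tsum_subtype_sub_le_pProb (hG : G.IsCompleteProductGraph p) {S : Set V} {v : V}
    (hv : v ∈ S) : ∑' u : S, p u - p v ≤ G.pProb S v := by
  have hnonneg : 0 ≤ ∑' u : S, p u - p v := nonneg_of_mul_nonneg_right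
    ((hG.hasSum_m_subtype hv).tsum_eq ▸ tsum_nonneg fun u => G.nonneg v u) (hG.pos v)
  rw [hG.pProb_eq hv]
  exact le_div_self hnonneg (by linarith [hG.lt_one v]) (by linarith [hG.pos v])

theorem bddAbove_range_pProb (hG : G.IsCompleteProductGraph p) (S : Set V) :
    BddAbove (Set.range fun v : S => G.pProb S v) :=
  ⟨_, Set.forall_mem_range.2 fun v => hG.pProb_le_tsum_subtype v.2⟩

theorem iSup_pProb_compl_singleton [Infinite V] (hG : G.IsCompleteProductGraph p) (o : V) :
    ⨆ w : ({o}ᶜ : Set V), G.pProb {o}ᶜ w = 1 - p o := by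
  have hS : ∑' u : ({o}ᶜ : Set V), p u = 1 - p o :=
    ((hasSum_singleton o p).hasSum_iff_compl.1 hG.hasSum).tsum_eq
  have : Nonempty ({o}ᶜ : Set V) := (Set.finite_singleton o).infinite_compl.nonempty.to_subtype
  refine le_antisymm (ciSup_le fun w => hS ▸ hG.pProb_le_tsum_subtype w.2) ?_
  refine le_of_forall_lt fun c hc => ?_
  obtain ⟨w, hwo, hw⟩ : ∃ w, w ≠ o ∧ p w < 1 - p o - c :=
    ((Filter.eventually_cofinite_ne o).and
      (hG.hasSum.summable.tendsto_cofinite_zero.eventually_lt_const (by linarith))).exists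
  calc c < 1 - p o - p w := by linarith
    _ ≤ G.pProb {o}ᶜ w := hS ▸ hG.tsum_subtype_sub_le_pProb hwo
    _ ≤ _ := le_ciSup (hG.bddAbove_range_pProb _) ⟨w, hwo⟩

theorem kappaPair_singleton_compl [Infinite V] (hG : G.IsCompleteProductGraph p) (o : V) :
    G.kappaPair {o} {o}ᶜ = 1 - p o := by
  rw [kappaPair, iSup_pProb_singleton, hG.iSup_pProb_compl_singleton]
  exact max_eq_right (by linarith [hG.lt_one o])

theorem add_le_tsum_subtype (hG : G.IsCompleteProductGraph p) {A : Set V} {o v : V}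
    (ho : o ∈ A) (hv : v ∈ A) (hvo : v ≠ o) : p o + p v ≤ ∑' u : A, p u := by
  have hne : (⟨o, ho⟩ : A) ≠ ⟨v, hv⟩ := fun h => hvo (congrArg Subtype.val h).symm
  simpa [Finset.sum_pair hne] using sum_le_hasSum (f := fun u : A => p u) {⟨o, ho⟩, ⟨v, hv⟩}
    (fun u _ => (hG.pos u).le) (hG.hasSum_subtype A)

theorem le_kappaPair_compl [Infinite V] (hG : G.IsCompleteProductGraph p) {o : V}
    (hhalf : 1 / 2 ≤ p o) {A : Set V} (hoA : o ∈ A) : 1 - p o ≤ G.kappaPair A Aᶜ := by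
  rcases A.subsingleton_or_nontrivial with hA | hA
  · rw [hA.eq_singleton_of_mem hoA, hG.kappaPair_singleton_compl]
  -- A second vertex `v ∈ A` already sends probability `≥ p o ≥ 1 - p o` into `A`.
  obtain ⟨v, hvA, hvo⟩ := hA.exists_ne o
  calc 1 - p o ≤ ∑' u : A, p u - p v := by linarith [hG.add_le_tsum_subtype hoA hvA hvo]
    _ ≤ G.pProb A v := hG.tsum_subtype_sub_le_pProb hvA
    _ ≤ ⨆ u : A, G.pProb A u := le_ciSup (hG.bddAbove_range_pProb A) ⟨v, hvA⟩
    _ ≤ G.kappaPair A Aᶜ := le_max_left _ _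

theorem kappa_eq [Infinite V] (hG : G.IsCompleteProductGraph p) {o : V} (hhalf : 1 / 2 ≤ p o) :
    G.kappa = 1 - p o := by
  refine IsLeast.csInf_eq ⟨⟨{o}, {o}ᶜ, Set.singleton_nonempty o,
    (Set.finite_singleton o).infinite_compl.nonempty, disjoint_compl_right,
    Set.union_compl_self _, (hG.kappaPair_singleton_compl o).symm⟩, ?_⟩
  rintro _ ⟨A, B, -, -, hdisj, hunion, rfl⟩
  have hB : B = Aᶜ := (isCompl_iff.2 ⟨hdisj, codisjoint_iff.2 hunion⟩).compl_eq.symm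
  subst hB
  by_cases hoA : o ∈ A
  · exact hG.le_kappaPair_compl hhalf hoA
  · simpa only [kappaPair_comm, compl_compl] using hG.le_kappaPair_compl hhalf (A := Aᶜ) hoA

end IsCompleteProductGraph

end SummableWeightedGraph

open SummableWeightedGraph in
theorem kappa_complete_graph_general (p : ℕ → ℝ) (hp : ∀ i, 0 < p i)
    (hsum : HasSum p 1) (G : SummableWeightedGraph ℕ)
    (hG : ∀ i j, G.m i j = if i = j then 0 else p i * p j)
    (hhalf : 1 / 2 ≤ p 0) :
    G.kappa = 1 - p 0 :=
  IsCompleteProductGraph.kappa_eq ⟨hp, hsum, hG⟩ hhalf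

open SummableWeightedGraph in
/-- if `p₁ ≥ 1/2` then `κ(K,m) = 1 - p₁` for the infinite complete
graph with weights `m(i,j) = pᵢ·pⱼ`. -/
theorem kappa_complete_graph (p : ℕ → ℝ) (hp : ∀ i, 0 < p i) (hmono : Antitone p)
    (hsum : HasSum p 1) (G : SummableWeightedGraph ℕ)
    (hG : ∀ i j, G.m i j = if i = j then 0 else p i * p j)
    (hhalf : 1 / 2 ≤ p 0) :
    G.kappa = 1 - p 0 :=
  kappa_complete_graph_general p hp hsum G hG hhalf
end
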